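/- arXiv:2108.02119 — 2 statements merged into one kernel-verified Lean document; each statement's English description precedes it below -/
import Mathlib

section
/- (Chen/Wang factorization) C^II_{2N} = (√2/2) ⬝ P_{2N} ⬝ blkdiag(C^II_N, C^IV_N ⬝ Ī_N) ⬝ [[I_N, Ī_N],[Ī_N, -I_N]], where P_{2N} is the perfect-shuffle permutation matrix. -/
open Real Matrix

noncomputable def dctII (N : Nat) : Matrix (Fin N) (Fin N) Real :=
  Matrix.of fun k n => Real.sqrt (2 / N) *
    (if (k : Nat) = 0 then 1 / Real.sqrt 2 else 1) *
    Real.cos ((k : Nat) * (2 * (n : Nat) + 1) * Real.pi / (2 * N))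

noncomputable def dctIV (N : Nat) : Matrix (Fin N) (Fin N) Real :=
  Matrix.of fun k n => Real.sqrt (2 / N) *
    Real.cos ((2 * (k : Nat) + 1) * (2 * (n : Nat) + 1) * Real.pi / (4 * N))

noncomputable def dstIV (N : Nat) : Matrix (Fin N) (Fin N) Real :=
  Matrix.of fun k n => Real.sqrt (2 / N) *
    Real.sin ((2 * (k : Nat) + 1) * (2 * (n : Nat) + 1) * Real.pi / (4 * N))

def exI (N : Nat) : Matrix (Fin N) (Fin N) Real :=
  Matrix.of fun k n => if (k : Nat) + (n : Nat) = N - 1 then 1 else 0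

def Jmat (N : Nat) : Matrix (Fin N) (Fin N) Real :=
  Matrix.diagonal fun n => (-1 : Real) ^ (n : Nat)

def pShuffle (N : Nat) : Matrix (Fin (2 * N)) (Fin (2 * N)) Real :=
  Matrix.of fun k n =>
    if (k : Nat) = (if (n : Nat) < N then 2 * (n : Nat) else (2 * (n : Nat)) % (2 * N) + 1)
    then 1 else 0

noncomputable def reix (N : Nat)
    (M : Matrix (Fin N ⊕ Fin N) (Fin N ⊕ Fin N) Real) :
    Matrix (Fin (2 * N)) (Fin (2 * N)) Real :=
  Matrix.reindex (finSumFinEquiv.trans (finCongr (two_mul N).symm))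
    (finSumFinEquiv.trans (finCongr (two_mul N).symm)) M

noncomputable def blk (N : Nat) (A B : Matrix (Fin N) (Fin N) Real) :
    Matrix (Fin (2 * N)) (Fin (2 * N)) Real :=
  reix N (Matrix.fromBlocks A 0 0 B)

noncomputable def butterfly (N : Nat) : Matrix (Fin (2 * N)) (Fin (2 * N)) Real :=
  reix N (Matrix.fromBlocks 1 (exI N) (exI N) (-1))

noncomputable def trilU (N : Nat) : Matrix (Fin N) (Fin N) Real :=
  Matrix.of fun k n =>
    if (n : Nat) = 0 then Real.sqrt 2 / 2
    else if (n : Nat) ≤ (k : Nat) then 1 else 0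

noncomputable def Amat (N : Nat) : Matrix (Fin N) (Fin N) Real :=
  Jmat N * trilU N * Jmat N

noncomputable def Dmat (N : Nat) : Matrix (Fin N) (Fin N) Real :=
  Matrix.diagonal fun n => 2 * Real.cos ((2 * (n : Nat) + 1) * Real.pi / (4 * N))

noncomputable def Gmat (N : Nat) : Matrix (Fin N) (Fin N) Real :=
  Matrix.diagonal fun n =>
    2 * (-1 : Real) ^ (n : Nat) * Real.cos ((2 * (n : Nat) + 1) * Real.pi / (4 * N))

noncomputable def Bmat (N : Nat) : Matrix (Fin N) (Fin N) Real :=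
  -(exI N * trilU N * Jmat N)

def bitrev (m j : Nat) : Nat :=
  (List.range m).foldl (fun acc i => 2 * acc + (if j.testBit i then 1 else 0)) 0

def Rmat (m : Nat) : Matrix (Fin (2 ^ m)) (Fin (2 ^ m)) Real :=
  Matrix.of fun i j => if (i : Nat) = bitrev m (j : Nat) then 1 else 0



section helpers

lemma mul_exI_apply (N : ℕ) (M : Matrix (Fin N) (Fin N) ℝ) (k j : Fin N) :
    (M * exI N) k j = M k ⟨N - 1 - (j:ℕ), by have := j.isLt; omega⟩ := by
  rw [Matrix.mul_apply]
  rw [Finset.sum_congr rfl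
    (g := fun t => if t = (⟨N - 1 - (j:ℕ), by have := j.isLt; omega⟩ : Fin N) then M k t else 0) ?_]
  · simp
  · intro t _
    have ht := t.isLt; have hj := j.isLt
    simp only [exI, Matrix.of_apply, Fin.ext_iff]
    by_cases h : (t:ℕ) + (j:ℕ) = N - 1
    · rw [if_pos h, if_pos (by omega), mul_one]
    · rw [if_neg h, if_neg (by omega), mul_zero]

lemma esymm_lt (N : ℕ) (i : Fin (2*N)) (h : (i:ℕ) < N) :
    (finSumFinEquiv.trans (finCongr (two_mul N).symm)).symm i = Sum.inl ⟨(i:ℕ), h⟩ := by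
  rw [Equiv.symm_apply_eq]
  simp [Fin.ext_iff]

lemma esymm_ge (N : ℕ) (i : Fin (2*N)) (h : ¬ (i:ℕ) < N) :
    (finSumFinEquiv.trans (finCongr (two_mul N).symm)).symm i
      = Sum.inr ⟨(i:ℕ) - N, by have := i.isLt; omega⟩ := by
  rw [Equiv.symm_apply_eq]
  simp [Fin.ext_iff]
  omega

lemma sqrt_half (N : ℕ) (hN : 0 < N) :
    Real.sqrt 2 / 2 * Real.sqrt (2/(N:ℝ)) = Real.sqrt (2 / (2*(N:ℝ))) := by
  have hNR : (N:ℝ) ≠ 0 := Nat.cast_ne_zero.mpr hN.ne'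
  rw [show (2:ℝ)/(2*(N:ℝ)) = 1/N by field_simp]
  rw [show (2:ℝ)/(N:ℝ) = 2*(1/N) by ring, Real.sqrt_mul (by norm_num : (0:ℝ) ≤ 2)]
  rw [div_mul_eq_mul_div, ← mul_assoc, Real.mul_self_sqrt (by norm_num : (0:ℝ) ≤ 2)]
  ring

lemma pShuffle_mul_apply (N : ℕ) (X : Matrix (Fin (2*N)) (Fin (2*N)) ℝ)
    (k m g : Fin (2*N))
    (hg : (g:ℕ) = if (k:ℕ) % 2 = 0 then (k:ℕ)/2 else N + (k:ℕ)/2) :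
    (pShuffle N * X) k m = X g m := by
  rw [Matrix.mul_apply]
  rw [Finset.sum_congr rfl (g := fun j => if j = g then X j m else 0) ?_]
  · simp
  · intro j _
    have hj := j.isLt; have hk := k.isLt; have hgl := g.isLt
    simp only [pShuffle, Matrix.of_apply]
    have hcond : ((k:ℕ) = (if (j:ℕ) < N then 2 * (j:ℕ) else (2 * (j:ℕ)) % (2 * N) + 1))
        ↔ j = g := by
      rw [Fin.ext_iff, hg]
      by_cases hjN : (j:ℕ) < N
      · rw [if_pos hjN]
        by_cases hke : (k:ℕ) % 2 = 0
        · rw [if_pos hke]; omega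
        · rw [if_neg hke]; omega
      · rw [if_neg hjN]
        have hmod : (2*(j:ℕ)) % (2*N) = 2*(j:ℕ) - 2*N := by
          rw [Nat.mod_eq_sub_mod (by omega), Nat.mod_eq_of_lt (by omega)]
        by_cases hke : (k:ℕ) % 2 = 0
        · rw [if_pos hke]; omega
        · rw [if_neg hke]; omega
    by_cases h : j = g
    · rw [if_pos (hcond.mpr h), if_pos h, one_mul]
    · rw [if_neg (fun hh => h (hcond.mp hh)), if_neg h, zero_mul]

lemma blk_mul_butterfly (N : ℕ) (A B : Matrix (Fin N) (Fin N) ℝ) :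
    blk N A B * butterfly N =
      reix N (Matrix.fromBlocks A (A * exI N) (B * exI N) (-B)) := by
  unfold blk butterfly reix
  rw [Matrix.reindex_apply, Matrix.reindex_apply, Matrix.reindex_apply,
    Matrix.submatrix_mul_equiv, Matrix.fromBlocks_multiply]
  simp

end helpers

set_option maxHeartbeats 1000000 in
theorem dctII_chen_factorization (N : Nat) (hN : 0 < N) :
    dctII (2 * N) =
      (Real.sqrt 2 / 2) •
        (pShuffle N * blk N (dctII N) (dctIV N * exI N) * butterfly N) := by
  have hNR : (N:ℝ) ≠ 0 := Nat.cast_ne_zero.mpr hN.ne'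
  rw [Matrix.mul_assoc, blk_mul_butterfly]
  ext k m
  have hk2 := k.isLt; have hm2 := m.isLt
  rw [Matrix.smul_apply]
  by_cases hke : (k:ℕ) % 2 = 0
  · obtain ⟨r, hr⟩ : ∃ r, (k:ℕ) = 2*r := ⟨(k:ℕ)/2, by omega⟩
    have hrN : r < N := by omega
    rw [pShuffle_mul_apply N _ k m ⟨r, by omega⟩ (by rw [if_pos hke]; simp; omega)]
    simp only [reix, Matrix.reindex_apply, Matrix.submatrix_apply]
    rw [esymm_lt N ⟨r, by omega⟩ (by simpa using hrN)]
    by_cases hm : (m:ℕ) < N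
    · rw [esymm_lt N m hm, Matrix.fromBlocks_apply₁₁]
      simp only [dctII, Matrix.of_apply, smul_eq_mul, Fin.val_mk]
      simp only [hr]
      push_cast
      rw [show (2*(r:ℝ)) * (2*((m:ℕ):ℝ)+1) * Real.pi / (2*(2*(N:ℝ))) =
            (r:ℝ) * (2*((m:ℕ):ℝ)+1) * Real.pi / (2*(N:ℝ)) by ring]
      rw [← sqrt_half N hN]
      simp only [Nat.mul_eq_zero, OfNat.ofNat_ne_zero, false_or]
      ring
    · rw [esymm_ge N m hm, Matrix.fromBlocks_apply₁₂, mul_exI_apply]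
      obtain ⟨j, t, hjN, htN, hmj⟩ : ∃ j t, j < N ∧ j + t + 1 = N ∧ (m:ℕ) = N + j :=
        ⟨(m:ℕ) - N, N - 1 - ((m:ℕ) - N), by omega, by omega, by omega⟩
      have hcol : N - 1 - (N + j - N) = t := by omega
      have htR : (t:ℝ) = (N:ℝ) - (j:ℝ) - 1 := by
        have : ((j:ℝ) + t + 1) = (N:ℝ) := by exact_mod_cast congrArg (Nat.cast : ℕ → ℝ) htN
        linarith
      simp only [dctII, Matrix.of_apply, smul_eq_mul, Fin.val_mk]
      simp only [hr, hcol, hmj]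
      push_cast
      rw [htR]
      rw [show 2 * (r:ℝ) * (2 * ((N:ℝ) + (j:ℝ)) + 1) * Real.pi / (2 * (2 * (N:ℝ)))
            = (r:ℝ)*Real.pi + (r:ℝ)*(2*(j:ℝ)+1)*Real.pi/(2*(N:ℝ)) by field_simp; ring]
      rw [show (r:ℝ) * (2 * ((N:ℝ) - (j:ℝ) - 1) + 1) * Real.pi / (2 * (N:ℝ))
            = (r:ℝ)*Real.pi - (r:ℝ)*(2*(j:ℝ)+1)*Real.pi/(2*(N:ℝ)) by field_simp; ring]
      rw [Real.cos_add, Real.cos_sub, Real.sin_nat_mul_pi]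
      rw [← sqrt_half N hN]
      simp only [Nat.mul_eq_zero, OfNat.ofNat_ne_zero, false_or]
      ring
  · obtain ⟨r, hr⟩ : ∃ r, (k:ℕ) = 2*r+1 := ⟨(k:ℕ)/2, by omega⟩
    have hrN : r < N := by omega
    rw [pShuffle_mul_apply N _ k m ⟨N+r, by omega⟩ (by rw [if_neg hke]; simp; omega)]
    simp only [reix, Matrix.reindex_apply, Matrix.submatrix_apply]
    rw [esymm_ge N ⟨N+r, by omega⟩ (by simp)]
    by_cases hm : (m:ℕ) < N
    · rw [esymm_lt N m hm, Matrix.fromBlocks_apply₂₁, mul_exI_apply, mul_exI_apply]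
      have hrow : N + r - N = r := by omega
      have hcol : N - 1 - (N - 1 - (m:ℕ)) = (m:ℕ) := by omega
      simp only [dctII, dctIV, Matrix.of_apply, smul_eq_mul, Fin.val_mk, hrow, hcol, hr]
      rw [if_neg (by omega : ¬(2*r+1 = 0))]
      push_cast
      rw [show (2*(r:ℝ)+1) * (2*((m:ℕ):ℝ)+1) * Real.pi / (2*(2*(N:ℝ)))
            = (2*(r:ℝ)+1) * (2*((m:ℕ):ℝ)+1) * Real.pi / (4*(N:ℝ)) by ring]
      rw [← sqrt_half N hN]
      ring
    · rw [esymm_ge N m hm, Matrix.fromBlocks_apply₂₂]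
      rw [Matrix.neg_apply, mul_exI_apply]
      obtain ⟨j, t, hjN, htN, hmj⟩ : ∃ j t, j < N ∧ j + t + 1 = N ∧ (m:ℕ) = N + j :=
        ⟨(m:ℕ) - N, N - 1 - ((m:ℕ) - N), by omega, by omega, by omega⟩
      have hcol : N - 1 - (N + j - N) = t := by omega
      have htR : (t:ℝ) = (N:ℝ) - (j:ℝ) - 1 := by
        have : ((j:ℝ) + t + 1) = (N:ℝ) := by exact_mod_cast congrArg (Nat.cast : ℕ → ℝ) htN
        linarith
      have hrow : N + r - N = r := by omega
      simp only [dctII, dctIV, Matrix.of_apply, smul_eq_mul, Fin.val_mk, hrow, hr, hmj, hcol]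
      rw [if_neg (by omega : ¬(2*r+1 = 0))]
      push_cast
      rw [htR]
      rw [show (2*(r:ℝ)+1) * (2*((N:ℝ)+(j:ℝ))+1) * Real.pi / (2*(2*(N:ℝ)))
            = ((r:ℝ)*Real.pi + Real.pi/2) + (2*(r:ℝ)+1)*(2*(j:ℝ)+1)*Real.pi/(4*(N:ℝ)) by
          field_simp; ring]
      rw [show (2*(r:ℝ)+1) * (2*((N:ℝ)-(j:ℝ)-1)+1) * Real.pi / (4*(N:ℝ))
            = ((r:ℝ)*Real.pi + Real.pi/2) - (2*(r:ℝ)+1)*(2*(j:ℝ)+1)*Real.pi/(4*(N:ℝ)) by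
          field_simp; ring]
      rw [Real.cos_add, Real.cos_sub, Real.cos_add, Real.sin_add, Real.cos_pi_div_two,
        Real.sin_pi_div_two, Real.sin_nat_mul_pi]
      rw [← sqrt_half N hN]
      ring
end

section
/- (Orthogonality of scaled approximations) Let T_N be an N×N real matrix with T_N ⬝ T_Nᵀ diagonal, let Ĝ_N satisfy Ĝ_N ⬝ Ĝ_Nᵀ = a·I_N for some real a, and let B̂_N be a generalized permutation matrix. Define T_{2N} = P_{2N} ⬝ blkdiag(I_N, B̂_N) ⬝ blkdiag(T_N, T_N) ⬝ blkdiag(I_N, Ĝ_N) ⬝ [[I_N, Ī_N],[Ī_N, -I_N]]. Then T_{2N} ⬝ T_{2N}ᵀ is a diagonal matrix. -/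
open Real Matrix

/-! The butterfly `F` satisfies `F Fᵀ = 2 I` because the exchange matrix is a symmetric involution,
so `T₂ₙ T₂ₙᵀ = 2 P (L Lᵀ) Pᵀ` for `L = blkdiag(T, B̂ T Ĝ)`. By `Ĝ Ĝᵀ = a I`,
`L Lᵀ = blkdiag(T Tᵀ, a B̂ (T Tᵀ) B̂ᵀ)`. Conjugating a diagonal matrix by a matrix with at most one
nonzero entry in each column, such as `B̂` or `P`, keeps it diagonal. -/

namespace Matrix

variable {l m n α : Type*}

theorem IsDiag.mul_mul_transpose [Fintype m] [NonUnitalNonAssocSemiring α] {M : Matrix m m α}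
    (hM : M.IsDiag) (Q : Matrix n m α) (hQ : ∀ k i j, Q i k ≠ 0 → Q j k ≠ 0 → i = j) :
    (Q * M * Qᵀ).IsDiag := by
  intro i j hij
  rw [mul_apply]
  refine Finset.sum_eq_zero fun l _ => ?_
  rw [mul_apply, Finset.sum_mul]
  refine Finset.sum_eq_zero fun k _ => ?_
  obtain rfl | hkl := eq_or_ne k l
  · by_cases hi : Q i k = 0
    · simp [hi]
    by_cases hj : Q j k = 0
    · simp [hj]
    exact absurd (hQ k i j hi hj) hij
  · simp [hM hkl]

theorem mul_mul_transpose_of_mul_transpose_eq_smul_one [Fintype m] [Fintype n] [DecidableEq m]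
    [CommSemiring α] (A : Matrix l m α) {F : Matrix m n α} {c : α} (hF : F * Fᵀ = c • 1) :
    A * F * (A * F)ᵀ = c • (A * Aᵀ) := by
  rw [transpose_mul, ← Matrix.mul_assoc, Matrix.mul_assoc A, hF, Matrix.mul_smul, Matrix.mul_one,
    Matrix.smul_mul]

theorem mul_mul_transpose_mul [Fintype m] [Fintype n] [CommSemiring α] (A : Matrix l m α)
    (M : Matrix m n α) : A * M * (A * M)ᵀ = A * (M * Mᵀ) * Aᵀ := by
  simp only [transpose_mul, Matrix.mul_assoc]

theorem diagonal_mul_perm_apply_ne_zero [Fintype n] [DecidableEq n] [NonAssocSemiring α]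
    {d : n → α} {σ : Equiv.Perm n} {i k : n}
    (h : (diagonal d * of fun i j => if σ j = i then (1 : α) else 0) i k ≠ 0) : σ k = i := by
  by_contra hk
  simp [diagonal_mul, hk] at h

theorem fromBlocks_involution_mul_transpose [Fintype n] [DecidableEq n] [CommRing α]
    {X : Matrix n n α} (hXt : Xᵀ = X) (hXX : X * X = 1) :
    fromBlocks 1 X X (-1) * (fromBlocks 1 X X (-1))ᵀ =
      (2 : α) • (1 : Matrix (n ⊕ n) (n ⊕ n) α) := by
  rw [fromBlocks_transpose, hXt, fromBlocks_multiply, ← fromBlocks_one, fromBlocks_smul]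
  simp [hXX, two_smul]

end Matrix

theorem exI_eq_toMatrix (N : Nat) : exI N = (Fin.revPerm.toPEquiv : Fin N ≃. Fin N).toMatrix := by
  ext i j
  simp only [exI, of_apply, PEquiv.toMatrix_apply, Equiv.toPEquiv_apply, Option.mem_def,
    Option.some.injEq, Fin.revPerm_apply, Fin.ext_iff, Fin.val_rev]
  exact if_congr (by omega) rfl rfl

theorem exI_transpose (N : Nat) : (exI N)ᵀ = exI N := by
  rw [exI_eq_toMatrix, ← PEquiv.toMatrix_symm, ← Equiv.toPEquiv_symm, Fin.revPerm_symm]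

theorem exI_mul_self (N : Nat) : exI N * exI N = 1 := by
  rw [exI_eq_toMatrix, ← PEquiv.toMatrix_trans, ← Equiv.toPEquiv_trans,
    show Fin.revPerm.trans Fin.revPerm = Equiv.refl (Fin N) from Equiv.ext Fin.rev_rev,
    Equiv.toPEquiv_refl, PEquiv.toMatrix_refl]

theorem reix_mul (N : Nat) (A B : Matrix (Fin N ⊕ Fin N) (Fin N ⊕ Fin N) Real) :
    reix N A * reix N B = reix N (A * B) := by
  simp only [reix, reindex_apply, submatrix_mul_equiv]

theorem reix_transpose (N : Nat) (A : Matrix (Fin N ⊕ Fin N) (Fin N ⊕ Fin N) Real) :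
    (reix N A)ᵀ = reix N Aᵀ :=
  transpose_reindex _ _ A

theorem reix_smul_one (N : Nat) (c : Real) : reix N (c • 1) = c • 1 := by
  simp only [reix, reindex_apply, submatrix_smul, Pi.smul_apply, submatrix_one_equiv]

theorem Matrix.IsDiag.reix {N : Nat} {A : Matrix (Fin N ⊕ Fin N) (Fin N ⊕ Fin N) Real}
    (hA : A.IsDiag) : (reix N A).IsDiag :=
  hA.submatrix (Equiv.injective _)

theorem blk_mul (N : Nat) (A B C D : Matrix (Fin N) (Fin N) Real) :
    blk N A B * blk N C D = blk N (A * C) (B * D) := by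
  simp [blk, reix_mul, fromBlocks_multiply]

theorem blk_transpose (N : Nat) (A B : Matrix (Fin N) (Fin N) Real) :
    (blk N A B)ᵀ = blk N Aᵀ Bᵀ := by
  simp [blk, reix_transpose, fromBlocks_transpose]

theorem Matrix.IsDiag.blk {N : Nat} {A B : Matrix (Fin N) (Fin N) Real}
    (hA : A.IsDiag) (hB : B.IsDiag) : (blk N A B).IsDiag :=
  (hA.fromBlocks hB).reix

theorem butterfly_mul_transpose (N : Nat) : butterfly N * (butterfly N)ᵀ = (2 : Real) • 1 := by
  rw [butterfly, reix_transpose, reix_mul,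
    fromBlocks_involution_mul_transpose (exI_transpose N) (exI_mul_self N), reix_smul_one]

theorem pShuffle_eq_of_apply_ne_zero {N : Nat} {i j k : Fin (2 * N)}
    (hi : pShuffle N i k ≠ 0) (hj : pShuffle N j k ≠ 0) : i = j := by
  simp only [pShuffle, of_apply, ne_eq, ite_eq_right_iff, not_forall] at hi hj
  exact Fin.ext (hi.1.trans hj.1.symm)

theorem scaled_approx_orthogonality {N : Nat}
    (T Bhat Ghat : Matrix (Fin N) (Fin N) Real) (a : Real)
    (hT : (T * Tᵀ).IsDiag)
    (hG : Ghat * Ghatᵀ = a • (1 : Matrix (Fin N) (Fin N) Real))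
    (hB : ∃ (d : Fin N → Real) (σ : Equiv.Perm (Fin N)),
      Bhat = Matrix.diagonal d * Matrix.of fun i j => if σ j = i then (1 : Real) else 0) :
    ((pShuffle N * blk N 1 Bhat * blk N T T * blk N 1 Ghat * butterfly N) *
      (pShuffle N * blk N 1 Bhat * blk N T T * blk N 1 Ghat * butterfly N)ᵀ).IsDiag := by
  obtain ⟨d, σ, hBhat⟩ := hB
  have hL : blk N 1 Bhat * blk N T T * blk N 1 Ghat = blk N T (Bhat * T * Ghat) := by
    simp only [blk_mul, Matrix.one_mul, Matrix.mul_one]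
  have hLL : blk N T (Bhat * T * Ghat) * (blk N T (Bhat * T * Ghat))ᵀ =
      blk N (T * Tᵀ) (a • (Bhat * (T * Tᵀ) * Bhatᵀ)) := by
    rw [blk_transpose, blk_mul, mul_mul_transpose_of_mul_transpose_eq_smul_one _ hG,
      mul_mul_transpose_mul]
  have hBTB : (Bhat * (T * Tᵀ) * Bhatᵀ).IsDiag := by
    subst hBhat
    exact hT.mul_mul_transpose _ fun _ _ _ hi hj =>
      (diagonal_mul_perm_apply_ne_zero hi).symm.trans (diagonal_mul_perm_apply_ne_zero hj)
  rw [Matrix.mul_assoc (pShuffle N), Matrix.mul_assoc (pShuffle N), hL,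
    mul_mul_transpose_of_mul_transpose_eq_smul_one _ (butterfly_mul_transpose N),
    mul_mul_transpose_mul, hLL]
  exact IsDiag.smul _ <| IsDiag.mul_mul_transpose (hT.blk (hBTB.smul a)) _
    fun _ _ _ hi hj => pShuffle_eq_of_apply_ne_zero hi hj
end
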